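/- Fix an integer t ≥ 2. In the polynomial ring K[E_t], the colon ideal ( ⟨ a_i b_j : 1 ≤ j < i ≤ t ⟩ + ⟨ a_i a_j f_1 f_3 e_2 : 1 ≤ j < i ≤ t ⟩ ) : ⟨ a_t² f_1 f_3 e_2 ⟩ equals the ideal ⟨ b_1, …, b_{t−1}, a_1, …, a_{t−1} ⟩ generated by those 2t − 2 variables. -/

import Mathlib

open MvPolynomial

noncomputable section

namespace ToricPaper

variable (K : Type) [Field K]

/-- The Hilbert function of `R/I`: dimension of the degree `j` part. -/
def hilb {σ : Type} (I : Ideal (MvPolynomial σ K)) (j : ℕ) : ℕ :=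
  Module.finrank K (Submodule.map (Ideal.Quotient.mkₐ K I).toLinearMap
    (homogeneousSubmodule σ K j))

/-- The Hilbert series of `R/I` as a power series over `ℤ`. -/
def hilbertSeries {σ : Type} (I : Ideal (MvPolynomial σ K)) : PowerSeries ℤ :=
  PowerSeries.mk fun j => (hilb K I j : ℤ)

/-- `h` is the `h`-polynomial of `R/I`: `h(1) ≠ 0` and
`HS_{R/I}(x) = h(x)/(1-x)^{dim R/I}`. -/
def IsHPolynomial {σ : Type} (I : Ideal (MvPolynomial σ K)) (h : Polynomial ℤ) : Prop :=
  Polynomial.eval 1 h ≠ 0 ∧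
  ∃ d : ℕ, ringKrullDim (MvPolynomial σ K ⧸ I) = d ∧
    (h : PowerSeries ℤ) = hilbertSeries K I * (1 - PowerSeries.X) ^ d

/-- A homogeneous ideal: all homogeneous components of its elements belong to it. -/
def IsHomogeneousIdeal {σ : Type} (I : Ideal (MvPolynomial σ K)) : Prop :=
  ∀ f ∈ I, ∀ n : ℕ, homogeneousComponent n f ∈ I

/-- The module of `i`-chains of the Koszul complex of the variables with
coefficients in `R/I`. -/
abbrev KChain {σ : Type} (I : Ideal (MvPolynomial σ K)) (i : ℕ) : Type :=
  {S : Finset σ // S.card = i} → (MvPolynomial σ K ⧸ I)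

/-- The Koszul differential. -/
def kd {σ : Type} [Finite σ] (I : Ideal (MvPolynomial σ K)) (i : ℕ)
    (f : KChain K I i) : KChain K I (i - 1) :=
  letI := Fintype.ofFinite σ
  letI := Classical.decEq σ
  letI : LinearOrder σ := IsWellOrder.linearOrder WellOrderingRel
  fun T =>
    if hi : 1 ≤ i then
      ∑ x : σ,
        if hx : x ∈ T.1 then 0
        else ((-1 : ℤ) ^ (T.1.filter (fun y => y < x)).card) •
          (Ideal.Quotient.mk I (X x) *
            f ⟨insert x T.1, by rw [Finset.card_insert_of_notMem hx, T.2]; omega⟩)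
    else 0

/-- The internal degree `j` part of the `i`-chains of the Koszul complex:
each Koszul basis element `e_S`, `|S| = i`, has degree `i`, so coefficients
lie in the degree `j - i` part of `R/I`. -/
def degPart {σ : Type} (I : Ideal (MvPolynomial σ K)) (i j : ℕ) :
    Set (KChain K I i) :=
  {f | (∀ T, f T ∈ Submodule.map (Ideal.Quotient.mkₐ K I).toLinearMap
          (homogeneousSubmodule σ K (j - i))) ∧ (i ≤ j ∨ f = 0)}

/-- Degree `j` Koszul cycles in homological degree `i`. -/
def cyclesSet {σ : Type} [Finite σ] (I : Ideal (MvPolynomial σ K)) (i j : ℕ) :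
    Set (KChain K I i) :=
  degPart K I i j ∩ {f | kd K I i f = 0}

/-- Degree `j` Koszul boundaries in homological degree `i`. -/
def boundariesSet {σ : Type} [Finite σ] (I : Ideal (MvPolynomial σ K)) (i j : ℕ) :
    Set (KChain K I i) :=
  kd K I (i + 1) '' (degPart K I (i + 1) j)

/-- The graded Betti numbers `β_{i,j}(R/I) = dim_K Tor_i(R/I, K)_j`, computed
as the dimension of the degree `j` part of the `i`-th homology of the Koszul
complex of the variables with coefficients in `R/I`. -/
def betti {σ : Type} [Finite σ] (I : Ideal (MvPolynomial σ K)) (i j : ℕ) : ℕ :=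
  Module.finrank K
    ((Submodule.span K (cyclesSet K I i j)) ⧸
      (Submodule.comap (Submodule.span K (cyclesSet K I i j)).subtype
        (Submodule.span K (boundariesSet K I i j))))

/-- Castelnuovo-Mumford regularity: `max { j - i | β_{i,j}(R/I) ≠ 0 }`. -/
def regularity {σ : Type} [Finite σ] (I : Ideal (MvPolynomial σ K)) : ℕ :=
  sSup {r | ∃ i j, betti K I i j ≠ 0 ∧ j = i + r}

/-- Projective dimension: `max { i | β_{i,j}(R/I) ≠ 0 for some j }`. -/
def pdim {σ : Type} [Finite σ] (I : Ideal (MvPolynomial σ K)) : ℕ :=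
  sSup {p | ∃ j, betti K I p j ≠ 0}

/-- `β_{a,b}(R/I)` is an extremal graded Betti number. -/
def IsExtremalBetti {σ : Type} [Finite σ] (I : Ideal (MvPolynomial σ K))
    (a b : ℕ) : Prop :=
  betti K I a b ≠ 0 ∧
  ∀ i j : ℕ, a ≤ i → b < j → ((b : ℤ) - a ≤ (j : ℤ) - i) → betti K I i j = 0

/-- The depth of `R/I`: the maximal length of a regular sequence on `R/I`
consisting of elements of the irrelevant maximal ideal `⟨x_1, …, x_n⟩`. -/
def depth {σ : Type} (I : Ideal (MvPolynomial σ K)) : ℕ :=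
  sSup {n | ∃ rs : List (MvPolynomial σ K), rs.length = n ∧
    (∀ x ∈ rs, x ∈ Ideal.span (Set.range (X : σ → MvPolynomial σ K))) ∧
    RingTheory.Sequence.IsRegular (MvPolynomial σ K ⧸ I) rs}

/-- The initial ideal of `I` with respect to a monomial order: the ideal
generated by the leading monomials of the nonzero elements of `I`. -/
def initialIdeal {σ : Type} (m : MonomialOrder σ) (I : Ideal (MvPolynomial σ K)) :
    Ideal (MvPolynomial σ K) :=
  Ideal.span {g | ∃ f ∈ I, f ≠ 0 ∧ ∃ u ∈ f.support,
    (∀ v ∈ f.support, m.toSyn v ≤ m.toSyn u) ∧ g = monomial u 1}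

/-- The toric ideal of a finite simple graph `G`: the kernel of the map
`K[E] → K[V]` sending the variable of an edge `{u,v}` to `uv`. -/
def toricIdeal {V : Type} (G : SimpleGraph V) : Ideal (MvPolynomial G.edgeSet K) :=
  RingHom.ker (MvPolynomial.aeval (R := K)
    (fun e : G.edgeSet =>
      Sym2.lift ⟨fun u v => (X u : MvPolynomial V K) * X v,
        fun _ _ => mul_comm _ _⟩ (e : Sym2 V))).toRingHom



/-! ### The graph `G_t` and its edge ring -/

/-- Edge variables of the graph `G_t`:
`a i = {x₁, y i}`, `f j` the triangle at `x₂`, `e j` the triangle at `x₁`,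
`b i = {x₂, y i}`. -/
abbrev EVar (t : ℕ) : Type := (Fin t ⊕ Fin 3) ⊕ (Fin 3 ⊕ Fin t)

/-- The edge `a i = {x₁, y i}` of `G_t`. -/
def EVar.a {t : ℕ} (i : Fin t) : EVar t := Sum.inl (Sum.inl i)
/-- The edges `f 0 = f₁ = {x₂,w₁}`, `f 1 = f₂ = {w₁,w₂}`, `f 2 = f₃ = {w₂,x₂}`. -/
def EVar.f {t : ℕ} (j : Fin 3) : EVar t := Sum.inl (Sum.inr j)
/-- The edges `e 0 = e₁ = {x₁,z₁}`, `e 1 = e₂ = {z₁,z₂}`, `e 2 = e₃ = {z₂,x₁}`. -/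
def EVar.e {t : ℕ} (j : Fin 3) : EVar t := Sum.inr (Sum.inl j)
/-- The edge `b i = {x₂, y i}` of `G_t`. -/
def EVar.b {t : ℕ} (i : Fin t) : EVar t := Sum.inr (Sum.inr i)

/-- Vertices of `G_t`: `inl 0 = x₁`, `inl 1 = x₂`, `inl 2 = z₁`, `inl 3 = z₂`,
`inl 4 = w₁`, `inl 5 = w₂`, and `inr i = y i`. -/
abbrev GtVertex (t : ℕ) : Type := Fin 6 ⊕ Fin t

/-- The map sending each edge variable of `G_t` to the product of the
variables of its two endpoints. -/
def gtMap (t : ℕ) : EVar t → MvPolynomial (GtVertex t) K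
  | Sum.inl (Sum.inl i) => X (Sum.inl 0) * X (Sum.inr i)
  | Sum.inl (Sum.inr j) =>
      ![X (Sum.inl 1) * X (Sum.inl 4), X (Sum.inl 4) * X (Sum.inl 5),
        X (Sum.inl 5) * X (Sum.inl 1)] j
  | Sum.inr (Sum.inl j) =>
      ![X (Sum.inl 0) * X (Sum.inl 2), X (Sum.inl 2) * X (Sum.inl 3),
        X (Sum.inl 3) * X (Sum.inl 0)] j
  | Sum.inr (Sum.inr i) => X (Sum.inl 1) * X (Sum.inr i)

/-- The toric ideal `I_{G_t} ⊆ K[E_t]`. -/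
def toricGt (t : ℕ) : Ideal (MvPolynomial (EVar t) K) :=
  RingHom.ker (MvPolynomial.aeval (R := K) (gtMap K t)).toRingHom

/-- The rank of a variable in the order
`a₁ > ⋯ > a_t > f₁ > f₂ > f₃ > e₁ > e₂ > e₃ > b₁ > ⋯ > b_t`
(smaller rank = larger variable). -/
def evarRank (t : ℕ) : EVar t → ℕ
  | Sum.inl (Sum.inl i) => (i : ℕ)
  | Sum.inl (Sum.inr j) => t + (j : ℕ)
  | Sum.inr (Sum.inl j) => t + 3 + (j : ℕ)
  | Sum.inr (Sum.inr i) => t + 6 + (i : ℕ)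

/-- The graded reverse lexicographic comparison of exponent vectors for the
variable order `a₁ > ⋯ > a_t > f₁ > f₂ > f₃ > e₁ > e₂ > e₃ > b₁ > ⋯ > b_t`:
`u ≤ v` iff `deg u < deg v`, or the degrees agree and either `u = v` or
`u x > v x` at the smallest variable `x` (i.e. largest rank) where `u` and `v`
differ. -/
def grevlexLe (t : ℕ) (u v : EVar t →₀ ℕ) : Prop :=
  (u.sum fun _ n => n) < (v.sum fun _ n => n) ∨
  ((u.sum fun _ n => n) = (v.sum fun _ n => n) ∧
    (u = v ∨ ∃ x, v x < u x ∧ ∀ y, evarRank t x < evarRank t y → u y = v y))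

/-- `m` is the graded reverse lexicographic monomial order with
`a₁ > ⋯ > a_t > f₁ > f₂ > f₃ > e₁ > e₂ > e₃ > b₁ > ⋯ > b_t`. -/
def IsGrevlex (t : ℕ) (m : MonomialOrder (EVar t)) : Prop :=
  ∀ u v : EVar t →₀ ℕ, (m.toSyn u ≤ m.toSyn v) ↔ grevlexLe t u v

/-- The binomials `a_i b_j - a_j b_i`, `1 ≤ i < j ≤ t`. -/
def G1Set (t : ℕ) : Set (MvPolynomial (EVar t) K) :=
  {g | ∃ i j : Fin t, i < j ∧
    g = X (EVar.a i) * X (EVar.b j) - X (EVar.a j) * X (EVar.b i)}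

/-- The binomials `a_i a_j f₁ f₃ e₂ - f₂ e₁ e₃ b_i b_j`, `1 ≤ i < j ≤ t`. -/
def G2Set (t : ℕ) : Set (MvPolynomial (EVar t) K) :=
  {g | ∃ i j : Fin t, i < j ∧
    g = X (EVar.a i) * X (EVar.a j) * X (EVar.f 0) * X (EVar.f 2) * X (EVar.e 1)
      - X (EVar.f 1) * X (EVar.e 0) * X (EVar.e 2) * X (EVar.b i) * X (EVar.b j)}

/-- The binomials `a_i² f₁ f₃ e₂ - f₂ e₁ e₃ b_i²`, `1 ≤ i ≤ t`. -/
def G3Set (t : ℕ) : Set (MvPolynomial (EVar t) K) :=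
  {g | ∃ i : Fin t,
    g = X (EVar.a i) ^ 2 * X (EVar.f 0) * X (EVar.f 2) * X (EVar.e 1)
      - X (EVar.f 1) * X (EVar.e 0) * X (EVar.e 2) * X (EVar.b i) ^ 2}

/-- The monomials `a_i b_j`, `1 ≤ j < i ≤ t`. -/
def M1Set (t : ℕ) : Set (MvPolynomial (EVar t) K) :=
  {g | ∃ i j : Fin t, j < i ∧ g = X (EVar.a i) * X (EVar.b j)}

/-- The monomials `a_i a_j f₁ f₃ e₂`, `1 ≤ i < j ≤ t`. -/
def M2Set (t : ℕ) : Set (MvPolynomial (EVar t) K) :=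
  {g | ∃ i j : Fin t, i < j ∧
    g = X (EVar.a i) * X (EVar.a j) * X (EVar.f 0) * X (EVar.f 2) * X (EVar.e 1)}

/-- The monomials `a_i² f₁ f₃ e₂`, `1 ≤ i ≤ t`. -/
def M3Set (t : ℕ) : Set (MvPolynomial (EVar t) K) :=
  {g | ∃ i : Fin t,
    g = X (EVar.a i) ^ 2 * X (EVar.f 0) * X (EVar.f 2) * X (EVar.e 1)}

/-! Let `J = ⟨a_j, b_j : j < t - 1⟩`. Being generated by variables, `J` is prime: it is the kernel
of the substitution setting those variables to `0`. Every generator of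
`I = ⟨a_i b_j : j < i⟩ + ⟨a_i a_j f₁ f₃ e₂ : i < j⟩` is divisible by a variable of `J`, while
`m = a_t² f₁ f₃ e₂` involves none of them, so `I : m ⊆ J : m = J`. Conversely
`b_j m = (a_t f₁ f₃ e₂) (a_t b_j)` and `a_j m = a_t (a_j a_t f₁ f₃ e₂)` lie in `I`. -/

end ToricPaper

namespace MvPolynomial

variable {σ R : Type*} [CommRing R]

def killVars (S : Set σ) : σ → MvPolynomial σ R := Sᶜ.indicator X

theorem aeval_killVars_X_of_mem {S : Set σ} {s : σ} (hs : s ∈ S) :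
    aeval (R := R) (killVars (R := R) S) (X s) = 0 := by
  simp [killVars, hs]

theorem aeval_killVars_X_of_notMem {S : Set σ} {s : σ} (hs : s ∉ S) :
    aeval (R := R) (killVars (R := R) S) (X s) = X s := by
  simp [killVars, hs]

theorem ker_aeval_killVars (S : Set σ) :
    RingHom.ker (aeval (R := R) (killVars (R := R) S)) = Ideal.span (X '' S) := by
  set J : Ideal (MvPolynomial σ R) := Ideal.span (X '' S)
  refine le_antisymm (fun p hp => ?_) ?_
  · have hmod : (Ideal.Quotient.mkₐ R J).comp (aeval (R := R) (killVars (R := R) S)) =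
        Ideal.Quotient.mkₐ R J := by
      refine algHom_ext fun s => ?_
      by_cases hs : s ∈ S
      · rw [AlgHom.comp_apply, aeval_killVars_X_of_mem hs, map_zero, eq_comm,
          Ideal.Quotient.mkₐ_eq_mk, Ideal.Quotient.eq_zero_iff_mem]
        exact Ideal.subset_span ⟨s, hs, rfl⟩
      · rw [AlgHom.comp_apply, aeval_killVars_X_of_notMem hs]
    have hp_mod := congr($hmod p)
    rw [AlgHom.comp_apply, RingHom.mem_ker.mp hp, map_zero, eq_comm,
      Ideal.Quotient.mkₐ_eq_mk, Ideal.Quotient.eq_zero_iff_mem] at hp_mod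
    exact hp_mod
  · rw [Ideal.span_le]
    rintro _ ⟨s, hs, rfl⟩
    exact aeval_killVars_X_of_mem hs

theorem isPrime_span_X_image [IsDomain R] (S : Set σ) :
    (Ideal.span (X '' S : Set (MvPolynomial σ R))).IsPrime := by
  rw [← ker_aeval_killVars]
  exact RingHom.ker_isPrime _

end MvPolynomial

namespace ToricPaper

def lowVars (t : ℕ) : Set (EVar t) :=
  {v | ∃ j : Fin t, (j : ℕ) < t - 1 ∧ (v = EVar.b j ∨ v = EVar.a j)}

theorem span_lowVars (K : Type) [Field K] (t : ℕ) :
    Ideal.span {g : MvPolynomial (EVar t) K | ∃ j : Fin t, (j : ℕ) < t - 1 ∧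
        (g = X (EVar.b j) ∨ g = X (EVar.a j))} = Ideal.span (X '' lowVars t) := by
  congr 1
  ext g
  simp only [lowVars, Set.mem_image, Set.mem_ofPred_eq]
  constructor
  · rintro ⟨j, hj, rfl | rfl⟩
    exacts [⟨_, ⟨j, hj, Or.inl rfl⟩, rfl⟩, ⟨_, ⟨j, hj, Or.inr rfl⟩, rfl⟩]
  · rintro ⟨_, ⟨j, hj, rfl | rfl⟩, rfl⟩
    exacts [⟨j, hj, Or.inl rfl⟩, ⟨j, hj, Or.inr rfl⟩]

theorem span_M1Set_add_span_M2Set_le (K : Type) [Field K] (t : ℕ) :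
    Ideal.span (M1Set K t) + Ideal.span (M2Set K t) ≤ Ideal.span (X '' lowVars t) := by
  refine sup_le (Ideal.span_le.mpr ?_) (Ideal.span_le.mpr ?_)
  · rintro _ ⟨i, j, hji, rfl⟩
    exact Ideal.mul_mem_left _ _ (Ideal.subset_span ⟨_, ⟨j, by omega, Or.inl rfl⟩, rfl⟩)
  · rintro _ ⟨i, j, hij, rfl⟩
    exact Ideal.mem_of_dvd _
      ⟨X (EVar.a j) * X (EVar.f 0) * X (EVar.f 2) * X (EVar.e 1), by ring⟩
      (Ideal.subset_span ⟨_, ⟨i, by omega, Or.inr rfl⟩, rfl⟩)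

theorem a_sq_mul_notMem_span_lowVars (K : Type) [Field K] {t : ℕ} (i : Fin t)
    (hi : t - 1 ≤ i) :
    X (EVar.a i) ^ 2 * X (EVar.f 0) * X (EVar.f 2) * X (EVar.e 1) ∉
      Ideal.span (X '' lowVars t : Set (MvPolynomial (EVar t) K)) := by
  rw [← MvPolynomial.ker_aeval_killVars, RingHom.mem_ker]
  simp [MvPolynomial.killVars, lowVars, EVar.a, EVar.b, EVar.f, EVar.e, X_ne_zero]
  omega

theorem X_mul_a_sq_mul_mem_of_mem_lowVars (K : Type) [Field K] {t : ℕ} (i : Fin t)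
    (hi : t - 1 ≤ i) {v : EVar t} (hv : v ∈ lowVars t) :
    X v * (X (EVar.a i) ^ 2 * X (EVar.f 0) * X (EVar.f 2) * X (EVar.e 1)) ∈
      Ideal.span (M1Set K t) + Ideal.span (M2Set K t) := by
  obtain ⟨j, hj, rfl | rfl⟩ := hv
  · exact Ideal.mem_sup_left (Ideal.mem_of_dvd _
      ⟨X (EVar.a i) * X (EVar.f 0) * X (EVar.f 2) * X (EVar.e 1), by ring⟩
      (Ideal.subset_span ⟨i, j, by omega, rfl⟩))
  · exact Ideal.mem_sup_right (Ideal.mem_of_dvd _ ⟨X (EVar.a i), by ring⟩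
      (Ideal.subset_span ⟨j, i, by omega, rfl⟩))

/-- from the proof of Theorem 3.7, Case 2. For `t ≥ 2`, in
`K[E_t]` one has
`(⟨a_i b_j : j < i⟩ + ⟨a_i a_j f₁ f₃ e₂ : j < i⟩) : ⟨a_t² f₁ f₃ e₂⟩
  = ⟨b₁, …, b_{t-1}, a₁, …, a_{t-1}⟩`. -/
theorem statement11 (K : Type) [Field K] (t : ℕ) (ht : 2 ≤ t) :
    Submodule.colon (Ideal.span (M1Set K t) + Ideal.span (M2Set K t))
      ((Ideal.span {X (EVar.a (⟨t - 1, by omega⟩ : Fin t)) ^ 2 *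
        X (EVar.f 0) * X (EVar.f 2) * X (EVar.e 1)} : Ideal (MvPolynomial (EVar t) K)) :
        Set (MvPolynomial (EVar t) K))
    = Ideal.span {g : MvPolynomial (EVar t) K | ∃ j : Fin t, (j : ℕ) < t - 1 ∧
        (g = X (EVar.b j) ∨ g = X (EVar.a j))} := by
  rw [span_lowVars]
  refine le_antisymm (fun r hr => ?_) (Ideal.span_le.mpr ?_)
  · rw [Ideal.mem_colon_span_singleton] at hr
    exact ((MvPolynomial.isPrime_span_X_image _).mem_or_mem
      (span_M1Set_add_span_M2Set_le K t hr)).resolve_right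
        (a_sq_mul_notMem_span_lowVars K _ le_rfl)
  · rintro _ ⟨v, hv, rfl⟩
    exact Ideal.mem_colon_span_singleton.mpr
      (X_mul_a_sq_mul_mem_of_mem_lowVars K _ le_rfl hv)

end ToricPaper
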